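/- Every model of ZU that satisfies every instance of the first-order reflection scheme RP also satisfies every instance of the Collection scheme. -/
import Mathlib


set_option linter.unusedVariables false
namespace Urelements

/-- First-order formulas of the language of urelement set theory, with a binary
relation `∈` (`mem`), equality, and a unary predicate `𝒜` (`ur`), using de Bruijn
variables `Fin n`. -/
inductive Fml : ℕ → Type
  | mem {n : ℕ} : Fin n → Fin n → Fml n
  | eq  {n : ℕ} : Fin n → Fin n → Fml n
  | ur  {n : ℕ} : Fin n → Fml n
  | not {n : ℕ} : Fml n → Fml n
  | and {n : ℕ} : Fml n → Fml n → Fml n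
  | ex  {n : ℕ} : Fml (n + 1) → Fml n

/-- Tarskian satisfaction of a formula in the structure `(M, E, A)`. -/
def Realize {M : Type} (E : M → M → Prop) (A : M → Prop) :
    ∀ {n : ℕ}, Fml n → (Fin n → M) → Prop
  | _, .mem i j, v => E (v i) (v j)
  | _, .eq i j, v => v i = v j
  | _, .ur i, v => A (v i)
  | _, .not φ, v => ¬ Realize E A φ v
  | _, .and φ ψ, v => Realize E A φ v ∧ Realize E A ψ v
  | _, .ex φ, v => ∃ x, Realize E A φ (Fin.snoc v x)

/-- Satisfaction of `φ` relativized to the members of `t`: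
all quantifiers range over `{x | E x t}`. -/
def RealizeIn {M : Type} (E : M → M → Prop) (A : M → Prop) (t : M) :
    ∀ {n : ℕ}, Fml n → (Fin n → M) → Prop
  | _, .mem i j, v => E (v i) (v j)
  | _, .eq i j, v => v i = v j
  | _, .ur i, v => A (v i)
  | _, .not φ, v => ¬ RealizeIn E A t φ v
  | _, .and φ ψ, v => RealizeIn E A t φ v ∧ RealizeIn E A t ψ v
  | _, .ex φ, v => ∃ x, E x t ∧ RealizeIn E A t φ (Fin.snoc v x)

/- ### The axioms of urelement set theory -/

/-- Axiom 𝒜: urelements have no members. -/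
def AxiomA {M : Type} (E : M → M → Prop) (A : M → Prop) : Prop :=
  ∀ x, A x → ∀ y, ¬ E y x

/-- Extensionality for sets. -/
def Extensionality {M : Type} (E : M → M → Prop) (A : M → Prop) : Prop :=
  ∀ x y, ¬ A x → ¬ A y → (∀ z, E z x ↔ E z y) → x = y

def Foundation {M : Type} (E : M → M → Prop) (A : M → Prop) : Prop :=
  ∀ x, (∃ y, E y x) → ∃ z, E z x ∧ ∀ w, E w z → ¬ E w x

def Pairing {M : Type} (E : M → M → Prop) (A : M → Prop) : Prop :=
  ∀ x y, ∃ z, ∀ v, E v z ↔ (v = x ∨ v = y)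

def UnionAx {M : Type} (E : M → M → Prop) (A : M → Prop) : Prop :=
  ∀ x, ∃ y, ∀ z, E z y ↔ ∃ w, E w x ∧ E z w

def PowersetAx {M : Type} (E : M → M → Prop) (A : M → Prop) : Prop :=
  ∀ x, ∃ y, ∀ z, E z y ↔ (¬ A z ∧ ∀ w, E w z → E w x)

def InfinityAx {M : Type} (E : M → M → Prop) (A : M → Prop) : Prop :=
  ∃ s, (∃ y, E y s ∧ ¬ A y ∧ ∀ z, ¬ E z y) ∧
    ∀ x, E x s → ∃ u, E u s ∧ ∀ v, E v u ↔ (E v x ∨ v = x)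

/-- The Separation scheme: for every first-order formula `φ(z, u₁, …, uₙ)`. -/
def SeparationScheme {M : Type} (E : M → M → Prop) (A : M → Prop) : Prop :=
  ∀ (n : ℕ) (φ : Fml (n + 1)) (p : Fin n → M) (x : M),
    ∃ y, ∀ z, E z y ↔ (E z x ∧ Realize E A φ (Fin.snoc p z))

/-- The Replacement scheme. -/
def ReplacementScheme {M : Type} (E : M → M → Prop) (A : M → Prop) : Prop :=
  ∀ (n : ℕ) (φ : Fml (n + 2)) (p : Fin n → M) (w : M),
    (∀ x, E x w → ∃! y, Realize E A φ (Fin.snoc (Fin.snoc p x) y)) →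
    ∃ v, ∀ x, E x w → ∃ y, E y v ∧ Realize E A φ (Fin.snoc (Fin.snoc p x) y)

/-- The Collection scheme. -/
def CollectionScheme {M : Type} (E : M → M → Prop) (A : M → Prop) : Prop :=
  ∀ (n : ℕ) (φ : Fml (n + 2)) (p : Fin n → M) (w : M),
    (∀ x, E x w → ∃ y, Realize E A φ (Fin.snoc (Fin.snoc p x) y)) →
    ∃ v, ∀ x, E x w → ∃ y, E y v ∧ Realize E A φ (Fin.snoc (Fin.snoc p x) y)

/-- The theory ZU. -/
def ZU {M : Type} (E : M → M → Prop) (A : M → Prop) : Prop :=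
  AxiomA E A ∧ Extensionality E A ∧ Foundation E A ∧ Pairing E A ∧ UnionAx E A ∧
    PowersetAx E A ∧ InfinityAx E A ∧ SeparationScheme E A

/-- ZFU_R = ZU + Replacement. -/
def ZFUR {M : Type} (E : M → M → Prop) (A : M → Prop) : Prop :=
  ZU E A ∧ ReplacementScheme E A

/- ### Internal set-theoretic notions -/

/-- `t` is a transitive set. -/
def TransSet {M : Type} (E : M → M → Prop) (A : M → Prop) (t : M) : Prop :=
  ¬ A t ∧ ∀ y, E y t → ∀ z, E z y → E z t

/-- The reflection scheme RP: for every formula `φ` and every set `x` there is a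
transitive set `t ⊇ x` reflecting `φ`. -/
def RPScheme {M : Type} (E : M → M → Prop) (A : M → Prop) : Prop :=
  ∀ (n : ℕ) (φ : Fml n) (x : M),
    ∃ t, TransSet E A t ∧ (∀ z, E z x → E z t) ∧
      ∀ v : Fin n → M, (∀ i, E (v i) t) →
        (Realize E A φ v ↔ RealizeIn E A t φ v)

/-- The weak reflection scheme RP⁻. -/
def RPMinusScheme {M : Type} (E : M → M → Prop) (A : M → Prop) : Prop :=
  ∀ (n : ℕ) (φ : Fml n) (v : Fin n → M),
    Realize E A φ v →
      ∃ t, TransSet E A t ∧ (∀ i, E (v i) t) ∧ RealizeIn E A t φ v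

/-- `b` is a set of urelements. -/
def IsSetOfUrelements {M : Type} (E : M → M → Prop) (A : M → Prop) (b : M) : Prop :=
  ¬ A b ∧ ∀ x, E x b → A x

/-- `b` and `c` are disjoint. -/
def DisjointM {M : Type} (E : M → M → Prop) (A : M → Prop) (b c : M) : Prop :=
  ∀ z, E z b → ¬ E z c

/-- `p` is the Kuratowski ordered pair `⟨x, y⟩`. -/
def IsKPair {M : Type} (E : M → M → Prop) (A : M → Prop) (x y p : M) : Prop :=
  ¬ A p ∧ ∀ w, E w p ↔
    (¬ A w ∧ ((∀ v, E v w ↔ v = x) ∨ (∀ v, E v w ↔ (v = x ∨ v = y))))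

/-- `y` is a value of the (set-)function `f` at `x`. -/
def FVal {M : Type} (E : M → M → Prop) (A : M → Prop) (f x y : M) : Prop :=
  ∃ p, E p f ∧ IsKPair E A x y p

/-- `f` is a function with domain `d`. -/
def IsFuncOn {M : Type} (E : M → M → Prop) (A : M → Prop) (f d : M) : Prop :=
  ¬ A f ∧ (∀ p, E p f → ∃ x y, E x d ∧ IsKPair E A x y p) ∧
    (∀ x, E x d → ∃ y, FVal E A f x y) ∧
    (∀ x y y', FVal E A f x y → FVal E A f x y' → y = y')

/-- `f` is an injection from `b` into `c`. -/
def IsInjection {M : Type} (E : M → M → Prop) (A : M → Prop) (f b c : M) : Prop :=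
  IsFuncOn E A f b ∧ (∀ x y, FVal E A f x y → E y c) ∧
    (∀ x x' y, FVal E A f x y → FVal E A f x' y → x = x')

/-- `f` is a bijection from `b` onto `c`. -/
def IsBijection {M : Type} (E : M → M → Prop) (A : M → Prop) (f b c : M) : Prop :=
  IsInjection E A f b c ∧ ∀ y, E y c → ∃ x, E x b ∧ FVal E A f x y

/-- `b` and `c` are equinumerous (by an internal bijection). -/
def Equinumerous {M : Type} (E : M → M → Prop) (A : M → Prop) (b c : M) : Prop :=
  ∃ f, IsBijection E A f b c

/-- `u` is related to `v` by the set-relation `r` (a set of ordered pairs). -/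
def RelOf {M : Type} (E : M → M → Prop) (A : M → Prop) (r u v : M) : Prop :=
  ∃ p, E p r ∧ IsKPair E A u v p

/-- `r` is a well-ordering of `x`. -/
def IsWellOrderOn {M : Type} (E : M → M → Prop) (A : M → Prop) (r x : M) : Prop :=
  (∀ u v, RelOf E A r u v → (E u x ∧ E v x)) ∧
    (∀ u, E u x → ¬ RelOf E A r u u) ∧
    (∀ u v w, RelOf E A r u v → RelOf E A r v w → RelOf E A r u w) ∧
    (∀ u v, E u x → E v x → u ≠ v → (RelOf E A r u v ∨ RelOf E A r v u)) ∧
    (∀ s, ¬ A s → (∀ z, E z s → E z x) → (∃ z, E z s) →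
      ∃ m, E m s ∧ ∀ z, E z s → ¬ RelOf E A r z m)

def WellOrderable {M : Type} (E : M → M → Prop) (A : M → Prop) (x : M) : Prop :=
  ∃ r, ¬ A r ∧ IsWellOrderOn E A r x

/-- AC: every set is well-orderable. -/
def AxChoice {M : Type} (E : M → M → Prop) (A : M → Prop) : Prop :=
  ∀ x, ¬ A x → WellOrderable E A x

/-- ZFCU_R = ZFU_R + AC. -/
def ZFCUR {M : Type} (E : M → M → Prop) (A : M → Prop) : Prop :=
  ZFUR E A ∧ AxChoice E A

/-- AC_𝒜: every set of urelements is well-orderable. -/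
def ACA {M : Type} (E : M → M → Prop) (A : M → Prop) : Prop :=
  ∀ b, IsSetOfUrelements E A b → WellOrderable E A b

/-- `o` is a (von Neumann) ordinal: a transitive pure set well-ordered by `∈`. -/
def IsOrdinal {M : Type} (E : M → M → Prop) (A : M → Prop) (o : M) : Prop :=
  TransSet E A o ∧ (∀ x, E x o → TransSet E A x) ∧
    (∀ x y, E x o → E y o → (E x y ∨ x = y ∨ E y x))

/-- `k` is a cardinal: an ordinal not equinumerous with any of its members. -/
def IsCardinal {M : Type} (E : M → M → Prop) (A : M → Prop) (k : M) : Prop :=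
  IsOrdinal E A k ∧ ∀ o, E o k → ¬ Equinumerous E A o k

def IsLimitOrdinal {M : Type} (E : M → M → Prop) (A : M → Prop) (o : M) : Prop :=
  IsOrdinal E A o ∧ (∃ x, E x o) ∧ ∀ x, E x o → ∃ y, E y o ∧ E x y

/-- `k` is an infinite cardinal (a cardinal with a nonzero limit ordinal ≤ it). -/
def IsInfiniteCardinal {M : Type} (E : M → M → Prop) (A : M → Prop) (k : M) : Prop :=
  IsCardinal E A k ∧ ∃ b, (E b k ∨ b = k) ∧ IsLimitOrdinal E A b

/-- `o` is ω, the least nonzero limit ordinal. -/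
def IsOmega {M : Type} (E : M → M → Prop) (A : M → Prop) (o : M) : Prop :=
  IsLimitOrdinal E A o ∧ ∀ x, E x o → ¬ IsLimitOrdinal E A x

/-- The cardinal `k` is realized: some set of urelements is equinumerous with it. -/
def Realized {M : Type} (E : M → M → Prop) (A : M → Prop) (k : M) : Prop :=
  ∃ b, IsSetOfUrelements E A b ∧ Equinumerous E A b k

/-- Plenitude: every cardinal is realized. -/
def Plenitude {M : Type} (E : M → M → Prop) (A : M → Prop) : Prop :=
  ∀ k, IsCardinal E A k → Realized E A k

/-- Plenitude⁺: every set is equinumerous with some set of urelements. -/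
def PlenitudePlus {M : Type} (E : M → M → Prop) (A : M → Prop) : Prop :=
  ∀ x, ¬ A x → ∃ b, IsSetOfUrelements E A b ∧ Equinumerous E A x b

/-- `o` is the supremum (least upper bound in the ordinals) of the set `s`. -/
def IsSupremumOf {M : Type} (E : M → M → Prop) (A : M → Prop) (s o : M) : Prop :=
  IsOrdinal E A o ∧ (∀ k, E k s → (E k o ∨ k = o)) ∧
    ∀ o', IsOrdinal E A o' → (∀ k, E k s → (E k o' ∨ k = o')) → (E o o' ∨ o = o')

/-- Closure: the supremum of a set of realized cardinals is realized. -/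
def ClosureAx {M : Type} (E : M → M → Prop) (A : M → Prop) : Prop :=
  ∀ s, ¬ A s → (∀ k, E k s → IsCardinal E A k ∧ Realized E A k) →
    ∀ o, IsSupremumOf E A s o → Realized E A o

/-- `b` has a duplicate: a disjoint equinumerous set of urelements. -/
def HasDuplicate {M : Type} (E : M → M → Prop) (A : M → Prop) (b : M) : Prop :=
  ∃ c, IsSetOfUrelements E A c ∧ DisjointM E A b c ∧ Equinumerous E A b c

/-- Duplication: every set of urelements has a duplicate. -/
def Duplication {M : Type} (E : M → M → Prop) (A : M → Prop) : Prop :=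
  ∀ b, IsSetOfUrelements E A b → HasDuplicate E A b

/-- Duplication holds over `a`: every set of urelements disjoint from `a` has a
duplicate disjoint from `a`. -/
def DuplicationOver {M : Type} (E : M → M → Prop) (A : M → Prop) (a : M) : Prop :=
  ∀ b, IsSetOfUrelements E A b → DisjointM E A b a →
    ∃ c, IsSetOfUrelements E A c ∧ DisjointM E A c b ∧ DisjointM E A c a ∧
      Equinumerous E A b c

/-- `π` is an automorphism of the universe. -/
def IsAutomorphism {M : Type} (E : M → M → Prop) (A : M → Prop) (π : M ≃ M) : Prop :=
  (∀ x y, E (π x) (π y) ↔ E x y) ∧ (∀ x, A (π x) ↔ A x)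

/-- Homogeneity holds over `a`. -/
def HomogeneityOver {M : Type} (E : M → M → Prop) (A : M → Prop) (a : M) : Prop :=
  ∀ b c, IsSetOfUrelements E A b → IsSetOfUrelements E A c → Equinumerous E A b c →
    DisjointM E A b a → DisjointM E A c a →
    ∃ π : M ≃ M, IsAutomorphism E A π ∧ π b = c ∧ ∀ x, E x a → π x = x

/-- `t` is a tail of `a`. -/
def IsTailOf {M : Type} (E : M → M → Prop) (A : M → Prop) (t a : M) : Prop :=
  IsSetOfUrelements E A t ∧ DisjointM E A t a ∧
    ∀ c, IsSetOfUrelements E A c → DisjointM E A c a → ∃ f, IsInjection E A f c t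

/-- Tail: every set of urelements has a tail. -/
def TailAx {M : Type} (E : M → M → Prop) (A : M → Prop) : Prop :=
  ∀ a, IsSetOfUrelements E A a → ∃ t, IsTailOf E A t a

/-- Tail⁺: every set of urelements has a well-orderable tail. -/
def TailPlus {M : Type} (E : M → M → Prop) (A : M → Prop) : Prop :=
  ∀ a, IsSetOfUrelements E A a → ∃ t, IsTailOf E A t a ∧ WellOrderable E A t

/-- `s` is the restriction `f ↾ a`. -/
def IsRestrictionOf {M : Type} (E : M → M → Prop) (A : M → Prop) (f a s : M) : Prop :=
  ¬ A s ∧ ∀ p, E p s ↔ (E p f ∧ ∃ x y, IsKPair E A x y p ∧ E x a)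

/-- The DC_κ-scheme at the cardinal `k` of the model. -/
def DCSchemeAt {M : Type} (E : M → M → Prop) (A : M → Prop) (k : M) : Prop :=
  ∀ (n : ℕ) (φ : Fml (n + 2)) (p : Fin n → M),
    (∀ x, ∃ y, Realize E A φ (Fin.snoc (Fin.snoc p x) y)) →
    ∃ f, IsFuncOn E A f k ∧ ∀ a, E a k →
      ∃ s t, IsRestrictionOf E A f a s ∧ FVal E A f a t ∧
        Realize E A φ (Fin.snoc (Fin.snoc p s) t)

/-- The DC_ω-scheme. -/
def DComegaScheme {M : Type} (E : M → M → Prop) (A : M → Prop) : Prop :=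
  ∀ o, IsOmega E A o → DCSchemeAt E A o

/-- DC_{<Ord}: the DC_κ-scheme for every infinite cardinal κ. -/
def DCltOrd {M : Type} (E : M → M → Prop) (A : M → Prop) : Prop :=
  ∀ k, IsInfiniteCardinal E A k → DCSchemeAt E A k

/- ### Restriction to a subclass (for inner models) -/

def restrictE {M : Type} (E : M → M → Prop) (D : M → Prop) :
    {x : M // D x} → {x : M // D x} → Prop := fun a b => E a.1 b.1

def restrictA {M : Type} (A : M → Prop) (D : M → Prop) :
    {x : M // D x} → Prop := fun a => A a.1

/-- `t` is the transitive closure of `{x}` (the least transitive set with `x` as member). -/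
def IsTransClosOfSing {M : Type} (E : M → M → Prop) (A : M → Prop) (x t : M) : Prop :=
  TransSet E A t ∧ E x t ∧
    ∀ t', TransSet E A t' → E x t' → ∀ z, E z t → E z t'

/-- `kx` is the kernel of `x`: the set of urelements in the transitive closure of `{x}`. -/
def IsKernelOf {M : Type} (E : M → M → Prop) (A : M → Prop) (x kx : M) : Prop :=
  ¬ A kx ∧ ∃ t, IsTransClosOfSing E A x t ∧ ∀ a, E a kx ↔ (A a ∧ E a t)



/- ### Auxiliary machinery for the proof -/

/-- Rename the free variables of a formula along a map `ρ`. -/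
def Fml.rename : ∀ {m k : ℕ}, (Fin m → Fin k) → Fml m → Fml k
  | _, _, ρ, .mem i j => .mem (ρ i) (ρ j)
  | _, _, ρ, .eq i j => .eq (ρ i) (ρ j)
  | _, _, ρ, .ur i => .ur (ρ i)
  | _, _, ρ, .not φ => .not (Fml.rename ρ φ)
  | _, _, ρ, .and φ ψ => .and (Fml.rename ρ φ) (Fml.rename ρ ψ)
  | _, _, ρ, .ex φ =>
      .ex (Fml.rename (fun i => Fin.lastCases (Fin.last _)
        (fun j => (ρ j).castSucc) i) φ)

lemma snoc_comp_ext {M : Type} {m k : ℕ} (ρ : Fin m → Fin k) (v : Fin k → M) (x : M) :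
    (Fin.snoc v x : Fin (k + 1) → M) ∘
      (fun i => Fin.lastCases (Fin.last k) (fun j => (ρ j).castSucc) i)
      = Fin.snoc (v ∘ ρ) x := by
  funext i
  refine Fin.lastCases ?_ (fun j => ?_) i
  · simp
  · simp

lemma realize_rename {M : Type} (E : M → M → Prop) (A : M → Prop) :
    ∀ {m k : ℕ} (φ : Fml m) (ρ : Fin m → Fin k) (v : Fin k → M),
      Realize E A (Fml.rename ρ φ) v ↔ Realize E A φ (v ∘ ρ)
  | _, _, .mem i j, ρ, v => Iff.rfl
  | _, _, .eq i j, ρ, v => Iff.rfl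
  | _, _, .ur i, ρ, v => Iff.rfl
  | _, _, .not φ, ρ, v => by
      simp only [Fml.rename, Realize, realize_rename E A φ ρ v]
  | _, _, .and φ ψ, ρ, v => by
      simp only [Fml.rename, Realize, realize_rename E A φ ρ v,
        realize_rename E A ψ ρ v]
  | _, _, .ex φ, ρ, v => by
      simp only [Fml.rename, Realize]
      refine exists_congr fun x => ?_
      rw [realize_rename E A φ _ (Fin.snoc v x), snoc_comp_ext]

lemma realizeIn_rename {M : Type} (E : M → M → Prop) (A : M → Prop) (t : M) :
    ∀ {m k : ℕ} (φ : Fml m) (ρ : Fin m → Fin k) (v : Fin k → M),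
      RealizeIn E A t (Fml.rename ρ φ) v ↔ RealizeIn E A t φ (v ∘ ρ)
  | _, _, .mem i j, ρ, v => Iff.rfl
  | _, _, .eq i j, ρ, v => Iff.rfl
  | _, _, .ur i, ρ, v => Iff.rfl
  | _, _, .not φ, ρ, v => by
      simp only [Fml.rename, RealizeIn, realizeIn_rename E A t φ ρ v]
  | _, _, .and φ ψ, ρ, v => by
      simp only [Fml.rename, RealizeIn, realizeIn_rename E A t φ ρ v,
        realizeIn_rename E A t ψ ρ v]
  | _, _, .ex φ, ρ, v => by
      simp only [Fml.rename, RealizeIn]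
      refine exists_congr fun x => and_congr_right fun _ => ?_
      rw [realizeIn_rename E A t φ _ (Fin.snoc v x), snoc_comp_ext]

/-- From Pairing and Union: a set containing all elements of `w` and finitely
many given elements. -/
lemma exists_superset {M : Type} {E : M → M → Prop} {A : M → Prop}
    (hPair : Pairing E A) (hUnion : UnionAx E A) :
    ∀ (m : ℕ) (p : Fin m → M) (w : M),
      ∃ s, (∀ z, E z w → E z s) ∧ ∀ i, E (p i) s := by
  intro m
  induction m with
  | zero => exact fun p w => ⟨w, fun z hz => hz, fun i => i.elim0⟩
  | succ m ih =>
    intro p w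
    obtain ⟨s, hsw, hsp⟩ := ih (fun i => p i.castSucc) w
    obtain ⟨q, hq⟩ := hPair (p (Fin.last m)) (p (Fin.last m))
    obtain ⟨r, hr⟩ := hPair s q
    obtain ⟨u, hu⟩ := hUnion r
    have hsu : ∀ z, E z s → E z u := fun z hz =>
      (hu z).2 ⟨s, (hr s).2 (Or.inl rfl), hz⟩
    refine ⟨u, fun z hz => hsu z (hsw z hz), fun i => ?_⟩
    refine Fin.lastCases ?_ (fun j => ?_) i
    · exact (hu _).2 ⟨q, (hr q).2 (Or.inr rfl), (hq _).2 (Or.inl rfl)⟩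
    · exact hsu _ (hsp j)

/-- Every model of ZU that satisfies every instance of the
first-order reflection scheme RP also satisfies every instance of the
Collection scheme. -/
theorem zu_rp_implies_collection {M : Type} (E : M → M → Prop) (A : M → Prop)
    (hZU : ZU E A) (hRP : RPScheme E A) : CollectionScheme E A := by
  obtain ⟨hA, hExt, hFound, hPair, hUnion, hPow, hInf, hSep⟩ := hZU
  intro n φ p w H
  classical
  -- two distinct elements a₀ ≠ b₀
  obtain ⟨a₀, -, -⟩ := hInf
  obtain ⟨b₀, hz0⟩ := hPair a₀ a₀
  have hEs : E a₀ b₀ := (hz0 a₀).2 (Or.inl rfl)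
  have hne : a₀ ≠ b₀ := by
    intro h
    obtain ⟨m, hm1, hm2⟩ := hFound b₀ ⟨a₀, hEs⟩
    have hm : m = a₀ := by rcases (hz0 m).1 hm1 with h' | h' <;> exact h'
    have hss : E a₀ a₀ := by rw [← h] at hEs; exact hEs
    exact hm2 a₀ (by rw [hm]; exact hss) hEs
  -- a set s containing all elements of w, all parameters, and a₀, b₀
  obtain ⟨s, hsw, hsp⟩ := exists_superset hPair hUnion (n + 2)
    (Fin.snoc (Fin.snoc p a₀) b₀) w
  -- the selector formula Θ with variables (p, x, y, a):
  --   (y = a → ∃y' φ(p,x,y')) ∧ (y ≠ a → φ(p,x,y))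
  obtain ⟨t, hT, hsub, hrefl⟩ := hRP (n + 3)
    (Fml.and
      (Fml.not (Fml.and (Fml.eq (Fin.last (n + 1)).castSucc (Fin.last (n + 2)))
        (Fml.not (Fml.rename (fun i : Fin (n + 1) => i.castSucc.castSucc) (Fml.ex φ)))))
      (Fml.not (Fml.and
        (Fml.not (Fml.eq (Fin.last (n + 1)).castSucc (Fin.last (n + 2))))
        (Fml.not (Fml.rename Fin.castSucc φ))))) s
  have hwt : ∀ x, E x w → E x t := fun x hx => hsub x (hsw x hx)
  have hpt : ∀ i, E (p i) t := by
    intro i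
    have := hsp i.castSucc.castSucc
    simpa using hsub _ this
  have hat : E a₀ t := by
    have := hsp (Fin.last n).castSucc
    simpa using hsub _ this
  have hbt : E b₀ t := by
    have := hsp (Fin.last (n + 1))
    simpa using hsub _ this
  refine ⟨t, fun x hx => ?_⟩
  have hxt : E x t := hwt x hx
  set v2 : Fin (n + 1) → M := Fin.snoc p x with hv2
  have hv2t : ∀ i, E (v2 i) t := by
    intro i
    refine Fin.lastCases ?_ (fun j => ?_) i <;> simp [hv2, hxt, hpt]
  have htup : ∀ y a : M, E y t → E a t →
      ∀ i, E ((Fin.snoc (Fin.snoc v2 y) a : Fin (n + 3) → M) i) t := by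
    intro y a hy ha i
    refine Fin.lastCases ?_ (fun j => ?_) i
    · simpa using ha
    · refine Fin.lastCases ?_ (fun j' => ?_) j <;> simp [hy, hv2t]
  have hcomp1 : ∀ y a : M,
      (Fin.snoc (Fin.snoc v2 y) a : Fin (n + 3) → M) ∘ Fin.castSucc
        = Fin.snoc v2 y := by
    intro y a; funext i; simp [Function.comp]
  have hcomp2 : ∀ y a : M,
      (Fin.snoc (Fin.snoc v2 y) a : Fin (n + 3) → M) ∘
        (fun i : Fin (n + 1) => i.castSucc.castSucc) = v2 := by
    intro y a; funext i; simp [Function.comp]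
  -- Step 1: reflect at the tuple (p, x, a₀, a₀) to get a witness inside t
  have refl1 := hrefl (Fin.snoc (Fin.snoc v2 a₀) a₀) (htup a₀ a₀ hat hat)
  simp only [Realize, RealizeIn, realize_rename, realizeIn_rename,
    hcomp1, hcomp2, Fin.snoc_castSucc, Fin.snoc_last, not_true, not_false_iff,
    true_and, and_true, not_and, not_not, ne_eq, not_forall, not_exists,
    eq_self_iff_true, forall_true_left, imp_false] at refl1
  have hcomp3 : ∀ (y a z : M),
      ((Fin.snoc (Fin.snoc (Fin.snoc v2 y) a) z : Fin (n + 4) → M) ∘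
        fun i : Fin (n + 2) => Fin.lastCases (Fin.last (n + 3))
          (fun j : Fin (n + 1) => j.castSucc.castSucc.castSucc) i)
      = Fin.snoc v2 z := by
    intro y a z; funext i
    refine Fin.lastCases ?_ (fun j => ?_) i <;> simp [Function.comp]
  simp only [hcomp3, false_implies, and_true] at refl1
  obtain ⟨y, hyt, hy⟩ : ∃ y, E y t ∧ RealizeIn E A t φ (Fin.snoc v2 y) := by
    obtain ⟨y, hyt, hy⟩ := refl1.1 (H x hx)
    exact ⟨y, hyt, hy⟩
  -- Step 2: pick a selector c ∈ t with y ≠ c and reflect back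
  set c : M := if y = a₀ then b₀ else a₀ with hc
  have hct : E c t := by rw [hc]; split <;> assumption
  have hyc : y ≠ c := by
    rw [hc]; split
    · rename_i h; rw [h]; exact hne
    · assumption
  have refl2 := hrefl (Fin.snoc (Fin.snoc v2 y) c) (htup y c hyt hct)
  simp only [Realize, RealizeIn, realize_rename, realizeIn_rename,
    hcomp1, hcomp2, hcomp3, Fin.snoc_castSucc, Fin.snoc_last, hyc,
    not_true, not_false_iff, true_and, and_true, not_and, not_not, ne_eq,
    false_implies, true_implies, false_and, and_false, not_false_eq_true,
    forall_true_left] at refl2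
  exact ⟨y, hyt, refl2.2 hy⟩


end Urelements
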